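/- Let s ≥ 2 be an integer, q = 2^s, m an integer with m ≡ 2 (mod 4) and m ≥ 10, and n = q^m − 1. Let b = q^{m−1} + q^{m−2} and a = q^{(m−2)/2} + 1. Then gcd(a, n) = 1, and for every integer i with −(q−1) ≤ i ≤ q^{(m−2)/2} + q − 2, the residue (b + a·i) mod n belongs to T_{(q,m;0)}. -/

import Mathlib

/-- The `q`-weight of a nonnegative integer: the sum of its base-`q` digits. -/
def qWeight (q i : ℕ) : ℕ := (Nat.digits q i).sum

/-- The set `T_{(q,m;j)} = {i : 1 ≤ i ≤ q^m − 2, wt_q(i) ≡ j (mod 2)}` as a finset. -/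
def Tset (q m j : ℕ) : Finset ℕ :=
  (Finset.Icc 1 (q ^ m - 2)).filter fun i => qWeight q i % 2 = j

/-! With `H = q ^ ((m - 2) / 2)` we have `b = H² (q + 1)` and `a = H + 1`, and for every `i` in
the range, `b + a i` is a number `x + H y + H² z` whose three `H`-ary digits are explicit:
`(H - t, H - t - 1, q)` for `i = -t`, `(i, i, q + 1)` for `0 ≤ i < H`, and `(r, r + 1, q + 2)`
for `i = H + r`. Since `H` is a power of `q`, the `q`-weight is additive over these digits, and in
each case it is even. This number is less than `q ^ m - 1`, so it is its own residue mod `n`.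
Coprimality: a common divisor of `H + 1` and `q ^ m - 1` divides `q ^ gcd (m - 2, m) - 1 = q² - 1`,
hence `H - 1` because `(m - 2) / 2` is even, hence `2`, while `H + 1` is odd. -/

section qWeight

variable {q : ℕ}

theorem qWeight_add_pow_mul (hq : 1 < q) {k x : ℕ} (hx : x < q ^ k) (y : ℕ) :
    qWeight q (x + q ^ k * y) = qWeight q x + qWeight q y := by
  rcases Nat.eq_zero_or_pos y with rfl | hy
  · simp [qWeight]
  have hlen := (Nat.digits_length_le_iff hq x).2 hx
  have hdigits := Nat.digits_append_zeroes_append_digits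
    (k := k - (q.digits x).length) (n := x) hq hy
  rw [Nat.add_sub_cancel' hlen] at hdigits
  simp [qWeight, ← hdigits]

theorem qWeight_add_mul (hq : 1 < q) {x : ℕ} (hx : x < q) (y : ℕ) :
    qWeight q (x + q * y) = x + qWeight q y := by
  by_cases hxy : x = 0 ∧ y = 0
  · simp [hxy.1, hxy.2, qWeight]
  · simp [qWeight, Nat.digits_add q hq x y hx (by tauto)]

theorem qWeight_of_lt (hq : 1 < q) {x : ℕ} (hx : x < q) : qWeight q x = x := by
  simpa [qWeight] using qWeight_add_mul hq hx 0

theorem qWeight_base_add (hq : 1 < q) {c : ℕ} (hc : c < q) : qWeight q (q + c) = c + 1 := by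
  rw [show q + c = c + q * 1 by ring, qWeight_add_mul hq hc, qWeight_of_lt hq hq]

theorem qWeight_eq_qWeight_sub_one_add_one (hq : 1 < q) {x : ℕ} (hx : ¬q ∣ x) :
    qWeight q x = qWeight q (x - 1) + 1 := by
  have hmod : 0 < x % q := Nat.pos_of_ne_zero fun h => hx (Nat.dvd_of_mod_eq_zero h)
  have hlt : x % q < q := Nat.mod_lt _ (by omega)
  have hsplit := Nat.mod_add_div x q
  conv_lhs => rw [← hsplit]
  rw [show x - 1 = (x % q - 1) + q * (x / q) by omega,
    qWeight_add_mul hq hlt, qWeight_add_mul hq (by omega)]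
  omega

end qWeight

theorem coprime_pow_add_one_pow_sub_one {q h : ℕ} (hq : Even q) (hh : Even h) (hh0 : h ≠ 0) :
    Nat.Coprime (q ^ h + 1) (q ^ (2 * h + 2) - 1) := by
  set g := Nat.gcd (q ^ h + 1) (q ^ (2 * h + 2) - 1)
  have hg_left : g ∣ q ^ h + 1 := Nat.gcd_dvd_left _ _
  have hg_sq : g ∣ q ^ (2 * h) - 1 :=
    hg_left.trans ⟨q ^ h - 1, by simpa [← pow_mul, mul_comm] using Nat.sq_sub_sq (q ^ h) 1⟩
  have hgcd : Nat.gcd (2 * h) (2 * h + 2) = 2 := by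
    rw [Nat.gcd_self_add_right, Nat.gcd_eq_right (dvd_mul_right 2 h)]
  have hg_pred : g ∣ q ^ h - 1 := by
    have hg := Nat.dvd_gcd hg_sq (Nat.gcd_dvd_right (q ^ h + 1) _)
    rw [Nat.pow_sub_one_gcd_pow_sub_one, hgcd] at hg
    exact hg.trans (Nat.pow_sub_one_dvd_pow_sub_one q (even_iff_two_dvd.1 hh))
  have hg_two : g ∣ 2 := (Nat.dvd_sub hg_left hg_pred).trans <| by
    rcases (q ^ h).eq_zero_or_pos with h0 | h0
    · simp [h0]
    · rw [show q ^ h + 1 - (q ^ h - 1) = 2 by omega]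
  have hodd : Odd (q ^ h + 1) := (hq.pow_of_ne_zero hh0).add_one
  exact Nat.eq_one_of_dvd_coprimes (Nat.coprime_two_left.2 hodd) hg_two hg_left

/-- `N = x + q^k y + q^(2k) z` in base `q^k`; the range of `z` keeps `N` positive and below
`q^(2k+2) - 1`. -/
def EvenWeightDigits (q k : ℕ) (N : ℤ) : Prop :=
  ∃ x y z : ℕ, x < q ^ k ∧ y < q ^ k ∧ q ≤ z ∧ z ≤ q + 2 ∧
    Even (qWeight q x + qWeight q y + qWeight q z) ∧ N = x + q ^ k * (y + q ^ k * z)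

section EvenWeightDigits

variable {q k : ℕ}

theorem evenWeightDigits_of_neg (hq : 1 < q) (hk : k ≠ 0) {t : ℕ} (ht : 0 < t) (htq : t < q) :
    EvenWeightDigits q k (((q : ℤ) ^ k) ^ 2 * (q + 1) + (q ^ k + 1) * -t) := by
  have hqk : q ≤ q ^ k := Nat.le_self_pow hk q
  have hndvd : ¬q ∣ q ^ k - t := fun h => by
    have := Nat.dvd_sub (dvd_pow_self q hk) h
    rw [Nat.sub_sub_self (by omega)] at this
    exact absurd (Nat.le_of_dvd ht this) (by omega)
  refine ⟨q ^ k - t, q ^ k - t - 1, q, by omega, by omega, le_rfl, by omega, ?_, ?_⟩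
  · have hself : qWeight q q = 1 := by simpa using qWeight_base_add hq (c := 0) (by omega)
    rw [qWeight_eq_qWeight_sub_one_add_one hq hndvd, hself]
    exact ⟨qWeight q (q ^ k - t - 1) + 1, by ring⟩
  · push_cast [Nat.cast_sub (show t ≤ q ^ k by omega), Nat.cast_sub (show 1 ≤ q ^ k - t by omega)]
    ring

theorem evenWeightDigits_of_lt (hq : 1 < q) {j : ℕ} (hj : j < q ^ k) :
    EvenWeightDigits q k (((q : ℤ) ^ k) ^ 2 * (q + 1) + (q ^ k + 1) * j) := by
  refine ⟨j, j, q + 1, hj, hj, by omega, by omega, ?_, by push_cast; ring⟩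
  rw [qWeight_base_add hq hq]
  exact ⟨qWeight q j + 1, by ring⟩

theorem evenWeightDigits_of_ge (hq : 2 < q) (hqk : q ≤ q ^ k) {r : ℕ} (hr : r + 2 ≤ q) :
    EvenWeightDigits q k (((q : ℤ) ^ k) ^ 2 * (q + 1) + (q ^ k + 1) * (q ^ k + r)) := by
  refine ⟨r, r + 1, q + 2, by omega, by omega, by omega, le_rfl, ?_, by push_cast; ring⟩
  rw [qWeight_of_lt (by omega) (by omega), qWeight_of_lt (by omega) (by omega),
    qWeight_base_add (by omega) hq]
  exact ⟨r + 2, by ring⟩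

theorem evenWeightDigits_of_mem_Icc (hq : 2 < q) (hk : k ≠ 0) {i : ℤ}
    (hi₁ : -((q : ℤ) - 1) ≤ i) (hi₂ : i ≤ (q : ℤ) ^ k + q - 2) :
    EvenWeightDigits q k (((q : ℤ) ^ k) ^ 2 * (q + 1) + (q ^ k + 1) * i) := by
  have hqk : q ≤ q ^ k := Nat.le_self_pow hk q
  rcases lt_or_ge i 0 with hneg | hnonneg
  · obtain ⟨t, rfl⟩ : ∃ t : ℕ, i = -t := ⟨(-i).toNat, by omega⟩
    exact evenWeightDigits_of_neg (by omega) hk (by omega) (by omega)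
  rcases lt_or_ge i ((q : ℤ) ^ k) with hlt | hge
  · obtain ⟨j, rfl⟩ := Int.eq_ofNat_of_zero_le hnonneg
    exact evenWeightDigits_of_lt (by omega) (by exact_mod_cast hlt)
  · obtain ⟨r, rfl⟩ : ∃ r : ℕ, i = (q : ℤ) ^ k + r := ⟨(i - (q : ℤ) ^ k).toNat, by omega⟩
    exact evenWeightDigits_of_ge hq hqk (by omega)

theorem EvenWeightDigits.toNat_emod_mem_Tset {N : ℤ} (hN : EvenWeightDigits q k N) (hq : 2 < q) :
    (N % ((q ^ (2 * k + 2) - 1 : ℕ) : ℤ)).toNat ∈ Tset q (2 * k + 2) 0 := by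
  obtain ⟨x, y, z, hx, hy, hqz, hz, heven, rfl⟩ := hN
  set N := x + q ^ k * (y + q ^ k * z) with hN
  have hN_lt : N + 1 < q ^ (2 * k + 2) := calc
    N + 1 ≤ q ^ k * (q ^ k * (z + 1)) := by nlinarith
    _ < q ^ k * (q ^ k * (q * q)) := by gcongr; nlinarith
    _ = q ^ (2 * k + 2) := by ring
  have hN_pos : 0 < N := by
    have : 0 < z := by omega
    positivity
  have hcast : (x : ℤ) + q ^ k * (y + q ^ k * z) = (N : ℤ) := by push_cast [hN]; ring
  rw [hcast, Int.emod_eq_of_lt (by positivity) (by omega), Int.toNat_natCast]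
  simp only [Tset, Finset.mem_filter, Finset.mem_Icc]
  refine ⟨by omega, ?_⟩
  rw [hN, qWeight_add_pow_mul (by omega) hx, qWeight_add_pow_mul (by omega) hy, ← add_assoc,
    Nat.even_iff.1 heven]

end EvenWeightDigits

theorem stmt6 (s q m n : ℕ) (hs : 2 ≤ s) (hq : q = 2 ^ s)
    (hm : 10 ≤ m) (hmod4 : m % 4 = 2) (hn : n = q ^ m - 1)
    (b a : ℤ) (hb : b = (q : ℤ) ^ (m - 1) + (q : ℤ) ^ (m - 2))
    (ha : a = (q : ℤ) ^ ((m - 2) / 2) + 1) :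
    Int.gcd a (n : ℤ) = 1 ∧
      ∀ i : ℤ, -((q : ℤ) - 1) ≤ i → i ≤ (q : ℤ) ^ ((m - 2) / 2) + (q : ℤ) - 2 →
        ((b + a * i) % (n : ℤ)).toNat ∈ Tset q m 0 := by
  obtain ⟨h, rfl⟩ : ∃ h, m = 2 * h + 2 := ⟨(m - 2) / 2, by omega⟩
  have hhalf : (2 * h + 2 - 2) / 2 = h := by omega
  have hh : h ≠ 0 := by omega
  have hq_gt : 2 < q := hq ▸ lt_of_lt_of_le (by norm_num) (Nat.pow_le_pow_right two_pos hs)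
  subst hn
  rw [hhalf] at ha
  refine ⟨?_, fun i hi₁ hi₂ => ?_⟩
  · have hq_even : Even q := hq ▸ Nat.even_pow.2 ⟨even_two, by omega⟩
    rw [ha]
    exact_mod_cast coprime_pow_add_one_pow_sub_one hq_even (Nat.even_iff.2 (by omega)) hh
  · have hab : b + a * i = ((q : ℤ) ^ h) ^ 2 * (q + 1) + (q ^ h + 1) * i := by
      rw [hb, ha, show 2 * h + 2 - 1 = 2 * h + 1 by omega, show 2 * h + 2 - 2 = 2 * h by omega]
      ring
    rw [hhalf] at hi₂
    rw [hab]
    exact (evenWeightDigits_of_mem_Icc hq_gt hh hi₁ hi₂).toNat_emod_mem_Tset hq_gt
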